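/- Let ω be a unit-speed plane curve with angle map θ (ω̇ = (cos θ, sin θ)) satisfying θ̇ = λ Q(ω) with Q(x) = 4x₁(x₁² − x₂^b), λ ∈ ℝ. Define F(t) = λ P(ω(t))² − sin θ(t) with P(x) = x₁² − x₂^b. Then F'(t) = −θ̇(t) · (b/2) · (ω₂(t)^{b−1}/ω₁(t)) · sin θ(t) wherever ω₁(t) ≠ 0. -/

import Mathlib

open Real Set Filter

/-- `P(x) = x₁² − x₂^b`. -/
def P (b : ℕ) (x : ℝ × ℝ) : ℝ := x.1 ^ 2 - x.2 ^ b

/-- `Q(x) = 4x₁(x₁² − x₂^b)`. -/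
def Q (b : ℕ) (x : ℝ × ℝ) : ℝ := 4 * x.1 * (x.1 ^ 2 - x.2 ^ b)

/-
The curvature `θ̇ = λ Q(ω) = 4λ ω₁ P(ω)` makes the `cos θ` terms of `d/dt[λ P(ω)²]` and of
`d/dt[sin θ]` cancel; dividing the remaining term by `4 ω₁` expresses it through `θ̇` again.
-/

theorem Q_eq_mul_P (b : ℕ) (x : ℝ × ℝ) : Q b x = 4 * x.1 * P b x := rfl

theorem hasDerivAt_P_comp (b : ℕ) {γ : ℝ → ℝ × ℝ} {v : ℝ × ℝ} {t : ℝ}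
    (hγ : HasDerivAt γ v t) :
    HasDerivAt (fun s => P b (γ s))
      (2 * (γ t).1 * v.1 - b * (γ t).2 ^ (b - 1) * v.2) t := by
  have h₁ : HasDerivAt (fun s => (γ s).1) v.1 t := hγ.fst
  have h₂ : HasDerivAt (fun s => (γ s).2) v.2 t := hγ.snd
  simpa [P] using (h₁.fun_pow 2).fun_sub (h₂.fun_pow b)

theorem stmt18_general (b : ℕ) (lam : ℝ)
    (ω : ℝ → ℝ × ℝ) (θ : ℝ → ℝ)
    (hω : ∀ t, HasDerivAt ω (Real.cos (θ t), Real.sin (θ t)) t)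
    (hθ : ∀ t, HasDerivAt θ (lam * Q b (ω t)) t)
    (t : ℝ) (ht : (ω t).1 ≠ 0) :
    HasDerivAt (fun s => lam * (P b (ω s)) ^ 2 - Real.sin (θ s))
      (-(lam * Q b (ω t)) * ((b : ℝ) / 2) * ((ω t).2 ^ (b - 1) / (ω t).1) *
        Real.sin (θ t)) t := by
  have hF := (((hasDerivAt_P_comp b (hω t)).fun_pow 2).const_mul lam).fun_sub (hθ t).sin
  refine hF.congr_deriv ?_
  rw [Q_eq_mul_P]
  field_simp
  ring

/-- for a unit-speed plane curve `ω` with angle map `θ`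
(`ω̇ = (cos θ, sin θ)`, `θ̇ = λ Q(ω)`), the function `F(t) = λ P(ω(t))² − sin θ(t)`
satisfies `F'(t) = −θ̇(t) (b/2) (ω₂(t)^{b−1}/ω₁(t)) sin θ(t)` wherever `ω₁(t) ≠ 0`. -/
theorem stmt18 (b : ℕ) (hb : 5 ≤ b) (hodd : Odd b) (lam : ℝ)
    (ω : ℝ → ℝ × ℝ) (θ : ℝ → ℝ)
    (hω : ∀ t, HasDerivAt ω (Real.cos (θ t), Real.sin (θ t)) t)
    (hθ : ∀ t, HasDerivAt θ (lam * Q b (ω t)) t)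
    (t : ℝ) (ht : (ω t).1 ≠ 0) :
    HasDerivAt (fun s => lam * (P b (ω s)) ^ 2 - Real.sin (θ s))
      (-(lam * Q b (ω t)) * ((b : ℝ) / 2) * ((ω t).2 ^ (b - 1) / (ω t).1) *
        Real.sin (θ t)) t :=
  stmt18_general b lam ω θ hω hθ t ht
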